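/- arXiv:quant-ph/0307071 — 3 statements merged into one kernel-verified Lean document; each statement's English description precedes it below -/
import Mathlib

section
/- There exists N such that for all n ≥ N and every prime p the following holds. For every query function g : X̂_{n,p} → {−1,+1}, the number of normalized booleanized linear functions L_a ∈ 𝓛_{n,p} that are not p^{−n/3}-independent from g is at most p^{2n/3+2}. -/
/-- The domain `X̂_{n,p}`: vectors over `ℤ_p` whose last `n-1` coordinates are
not all zero. -/
def Xhat (n p : ℕ) : Set (Fin n → ZMod p) :=
  {x | ∃ i : Fin n, (i : ℕ) ≠ 0 ∧ x i ≠ 0}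

/-- The positive set of the booleanized linear function `L_a`. -/
def posSet (n p : ℕ) (a : Fin n → ZMod p) : Set (Fin n → ZMod p) :=
  {x ∈ Xhat n p | ∑ i, a i * x i = 1}

/-- Expectation of `g` over the uniform distribution on the finite set `S`. -/
noncomputable def expectOn {α : Type*} (S : Set α) (g : α → ℝ) : ℝ :=
  (∑ᶠ x ∈ S, g x) / S.ncard

/-- `L_a` is normalized: `a[0] = 1`. -/
def Normalized (n p : ℕ) (a : Fin n → ZMod p) : Prop :=
  ∀ i : Fin n, (i : ℕ) = 0 → a i = 1

/-- `L_a` is `ξ`-independent from the query function `g`. -/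
def XiIndep (n p : ℕ) (a : Fin n → ZMod p) (g : (Fin n → ZMod p) → ℝ) (ξ : ℝ) : Prop :=
  |expectOn (posSet n p a) g - expectOn (Xhat n p) g| ≤ ξ

/-!
Write a normalized `a` as `(1, b)` with `b ∈ ℤ_p^(n-1)`. The positive set `S_b` of `L_a` is the
graph `x₀ = 1 - b·x'` over the nonzero tails `x'`, so it has `p^(n-1) - 1` points, and the
deviation of `E_{S_b} g` from `μ = E_X̂ g` is `T(b) / (p^(n-1) - 1)` with
`T(b) = ∑_{x ∈ S_b} (g x - μ)`. Expanding, `∑_b T(b)² = ∑_{x,y} h(x) h(y) N(x,y)` where `h = g - μ`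
and `N(x,y)` counts the `b` with `x, y ∈ S_b`. If the tails `x'`, `y'` are linearly independent,
the two linear conditions on `b` are independent and `N(x,y) = p^(n-3)`; as `h` has mean zero this
constant drops out, and only the at most `p(p-1)` points `y` whose tail is parallel to `x'`
remain, with `|N(x,y) - p^(n-3)| ≤ p^(n-3)(p-1)`. A Schur test gives
`∑_b T(b)² ≤ p^(n-2)(p-1)² ∑ h² ≤ p^(n-2)(p-1)² p^n`, and Chebyshev's inequality bounds the
number of `b` with `|T(b)| > ξ (p^(n-1) - 1)` by `p² / ξ²`.
-/

open Finset Matrix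

theorem AddMonoidHom.card_fiber_mul_card_of_surjective {G H : Type*} [AddGroup G] [Fintype G]
    [AddMonoid H] [Fintype H] [DecidableEq H] (f : G →+ H) (hf : Function.Surjective f) (c : H) :
    #{g | f g = c} * Fintype.card H = Fintype.card G := calc
  _ = ∑ d : H, #{g | f g = d} := by
    rw [sum_congr rfl fun d _ => card_fiber_eq_of_mem_range f (hf d) (hf c), sum_const,
      card_univ, smul_eq_mul, mul_comm]
  _ = Fintype.card G := by
    rw [← card_univ, card_eq_sum_card_fiberwise fun _ _ => mem_univ (f _)]

theorem Matrix.mulVec_surjective_of_linearIndependent {K κ ι : Type*} [Field K] [Fintype κ]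
    [Fintype ι] {M : Matrix κ ι K} (hM : LinearIndependent K M.row) :
    Function.Surjective M.mulVec := by
  have hrank : Module.finrank K (LinearMap.range M.mulVecLin) = Module.finrank K (κ → K) := by
    rw [← Matrix.rank, M.rank_eq_finrank_span_row, finrank_span_eq_card hM,
      Module.finrank_fintype_fun_eq_card]
  exact LinearMap.range_eq_top.1 (Submodule.eq_top_of_finrank_eq hrank)

theorem card_filter_forall_dotProduct_eq_mul {K κ ι : Type*} [Field K] [Fintype K] [DecidableEq K]
    [Fintype κ] [DecidableEq κ] [Fintype ι] [DecidableEq ι] {u : κ → ι → K}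
    (hu : LinearIndependent K u) (c : κ → K) :
    #{b | ∀ k, u k ⬝ᵥ b = c k} * Fintype.card K ^ Fintype.card κ
      = Fintype.card K ^ Fintype.card ι := by
  rw [← Fintype.card_fun, ← Fintype.card_fun,
    ← (of u).mulVecLin.toAddMonoidHom.card_fiber_mul_card_of_surjective
      (mulVec_surjective_of_linearIndependent (M := of u) hu) c]
  congr 2
  ext b
  simp [funext_iff, mulVec]

theorem sum_sq_sum_filter_eq {R β X : Type*} [CommSemiring R] [Fintype β] (s : Finset X)
    (P : β → X → Prop) [∀ b x, Decidable (P b x)] (h : X → R) :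
    ∑ b, (∑ x ∈ s with P b x, h x) ^ 2 = ∑ x ∈ s, ∑ y ∈ s, h x * h y * #{b | P b x ∧ P b y} := by
  simp_rw [sq, sum_filter, sum_mul_sum]
  rw [sum_comm]
  refine sum_congr rfl fun x _ => ?_
  rw [sum_comm]
  refine sum_congr rfl fun y _ => ?_
  simp_rw [ite_zero_mul_ite_zero, ← sum_filter, sum_const, nsmul_eq_mul, mul_comm]

theorem sum_sum_mul_mul_le_of_sum_abs_le {X : Type*} (s : Finset X) (h : X → ℝ)
    {E : X → X → ℝ} (hE : ∀ x y, E x y = E y x) {R : ℝ} (hR : ∀ x ∈ s, ∑ y ∈ s, |E x y| ≤ R) :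
    ∑ x ∈ s, ∑ y ∈ s, h x * h y * E x y ≤ R * ∑ x ∈ s, h x ^ 2 := by
  have hsymm : ∑ x ∈ s, ∑ y ∈ s, h y ^ 2 * |E x y| = ∑ x ∈ s, ∑ y ∈ s, h x ^ 2 * |E x y| := by
    rw [sum_comm]
    exact sum_congr rfl fun x _ => sum_congr rfl fun y _ => by rw [hE]
  calc _ ≤ ∑ x ∈ s, ∑ y ∈ s, (h x ^ 2 * |E x y| + h y ^ 2 * |E x y|) / 2 := by
        gcongr with x _ y _
        have := two_mul_le_add_sq |h x| |h y|
        rw [sq_abs, sq_abs] at this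
        calc h x * h y * E x y ≤ |h x| * |h y| * |E x y| := by
              rw [← abs_mul, ← abs_mul]; exact le_abs_self _
          _ ≤ _ := by nlinarith [abs_nonneg (E x y)]
    _ = ∑ x ∈ s, h x ^ 2 * ∑ y ∈ s, |E x y| := by
        simp_rw [add_div, sum_add_distrib, ← sum_div, hsymm, mul_sum]
        ring
    _ ≤ ∑ x ∈ s, h x ^ 2 * R := by
        gcongr with x hx
        exact hR x hx
    _ = R * ∑ x ∈ s, h x ^ 2 := by rw [← sum_mul, mul_comm]

theorem card_filter_lt_abs_mul_sq_le {β : Type*} [Fintype β] (T : β → ℝ) {ε : ℝ} (hε : 0 ≤ ε) :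
    #{b | ε < |T b|} * ε ^ 2 ≤ ∑ b, T b ^ 2 := calc
  (#{b | ε < |T b|} : ℝ) * ε ^ 2 = ∑ b with ε < |T b|, ε ^ 2 := by rw [sum_const, nsmul_eq_mul]
  _ ≤ ∑ b with ε < |T b|, T b ^ 2 := sum_le_sum fun b hb => by
      rw [← sq_abs (T b)]
      exact pow_le_pow_left₀ hε (mem_filter.1 hb).2.le 2
  _ ≤ ∑ b, T b ^ 2 := sum_le_sum_of_subset_of_nonneg (filter_subset _ _) fun _ _ _ => sq_nonneg _

theorem expectOn_coe {α : Type*} (s : Finset α) (g : α → ℝ) :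
    expectOn ↑s g = (∑ x ∈ s, g x) / #s := by
  rw [expectOn, finsum_mem_coe_finset, Set.ncard_coe_finset]

theorem expectOn_coe_sub {α : Type*} {s : Finset α} (hs : s.Nonempty) (g : α → ℝ) (μ : ℝ) :
    expectOn ↑s g - μ = (∑ x ∈ s, (g x - μ)) / #s := by
  have : (#s : ℝ) ≠ 0 := by exact_mod_cast hs.card_pos.ne'
  rw [expectOn_coe, sum_sub_distrib, sum_const, nsmul_eq_mul]
  field_simp

theorem sum_sub_expectOn_eq_zero {α : Type*} (s : Finset α) (g : α → ℝ) :
    ∑ x ∈ s, (g x - expectOn ↑s g) = 0 := by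
  rcases s.eq_empty_or_nonempty with rfl | hs
  · simp
  · have : (#s : ℝ) ≠ 0 := by exact_mod_cast hs.card_pos.ne'
    rw [sum_sub_distrib, sum_const, nsmul_eq_mul, expectOn_coe]
    field_simp
    ring

theorem sum_sub_expectOn_sq_le {α : Type*} (s : Finset α) (g : α → ℝ) :
    ∑ x ∈ s, (g x - expectOn ↑s g) ^ 2 ≤ ∑ x ∈ s, g x ^ 2 := by
  set μ := expectOn ↑s g
  have hexp : ∀ x ∈ s, (g x - μ) ^ 2 = g x ^ 2 - 2 * μ * (g x - μ) - μ ^ 2 := fun x _ => by ring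
  rw [sum_congr rfl hexp, sum_sub_distrib, sum_sub_distrib, ← mul_sum,
    sum_sub_expectOn_eq_zero, sum_const, nsmul_eq_mul]
  nlinarith [sq_nonneg μ, (#s).cast_nonneg (α := ℝ)]

theorem cons_one_dotProduct_eq_one_iff {R : Type*} [CommRing R] {m : ℕ} (b : Fin m → R)
    (x : Fin (m + 1) → R) :
    (Fin.cons 1 b : Fin (m + 1) → R) ⬝ᵥ x = 1 ↔ Fin.tail x ⬝ᵥ b = 1 - x 0 := by
  rw [← vecCons, cons_dotProduct, one_mul, dotProduct_comm, eq_sub_iff_add_eq', vecHead, vecTail]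
  rfl

section Xhat

variable {p : ℕ}

def xhatFinset (p : ℕ) [NeZero p] (m : ℕ) : Finset (Fin (m + 1) → ZMod p) := {x | Fin.tail x ≠ 0}

def pairCount [NeZero p] {m : ℕ} (x y : Fin (m + 1) → ZMod p) : ℕ :=
  #{b : Fin m → ZMod p | Fin.cons 1 b ⬝ᵥ x = 1 ∧ Fin.cons 1 b ⬝ᵥ y = 1}

section

variable [NeZero p] {m : ℕ}

theorem coe_xhatFinset : (xhatFinset p m : Set (Fin (m + 1) → ZMod p)) = Xhat (m + 1) p := by
  ext x
  simp [xhatFinset, Xhat, Fin.exists_fin_succ, Function.ne_iff, Fin.tail]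

theorem posSet_cons_one (b : Fin m → ZMod p) :
    posSet (m + 1) p (Fin.cons 1 b) = ↑{x ∈ xhatFinset p m | Fin.cons 1 b ⬝ᵥ x = 1} := by
  rw [coe_filter, posSet, ← coe_xhatFinset]
  rfl

theorem card_filter_cons_one_dotProduct_eq_one (b : Fin m → ZMod p) :
    #{x ∈ xhatFinset p m | Fin.cons 1 b ⬝ᵥ x = 1} = p ^ m - 1 := by
  have hbij : #{x ∈ xhatFinset p m | Fin.cons 1 b ⬝ᵥ x = 1} = #{u : Fin m → ZMod p | u ≠ 0} := by
    apply card_nbij' Fin.tail (fun u => Fin.cons (1 - u ⬝ᵥ b) u)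
    · intro x hx
      simp_all [xhatFinset]
    · intro u hu
      simp_all [xhatFinset, cons_one_dotProduct_eq_one_iff]
    · intro x hx
      simp_all [xhatFinset, cons_one_dotProduct_eq_one_iff]
    · intro u _
      simp
  rw [hbij, filter_ne' univ 0, card_erase_of_mem (mem_univ _), card_univ, Fintype.card_fun,
    ZMod.card, Fintype.card_fin]

theorem pairCount_comm (x y : Fin (m + 1) → ZMod p) : pairCount x y = pairCount y x := by
  simp_rw [pairCount, and_comm]

theorem ncard_normalized_not_xiIndep_le (g : (Fin (m + 1) → ZMod p) → ℝ) (ξ : ℝ) :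
    {a | Normalized (m + 1) p a ∧ ¬ XiIndep (m + 1) p a g ξ}.ncard
      ≤ #{b : Fin m → ZMod p |
          ξ < |expectOn (posSet (m + 1) p (Fin.cons 1 b)) g - expectOn (Xhat (m + 1) p) g|} := by
  have hsub : {a | Normalized (m + 1) p a ∧ ¬ XiIndep (m + 1) p a g ξ}
      ⊆ ↑(image (fun b => (Fin.cons 1 b : Fin (m + 1) → ZMod p)) {b |
          ξ < |expectOn (posSet (m + 1) p (Fin.cons 1 b)) g - expectOn (Xhat (m + 1) p) g|}) := by
    rintro a ⟨ha, hbad⟩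
    refine mem_image.2 ⟨Fin.tail a, by simpa [XiIndep, ← ha 0 rfl] using hbad, ?_⟩
    rw [← ha 0 rfl, Fin.cons_self_tail]
  exact ((Set.ncard_le_ncard hsub (finite_toSet _)).trans_eq (Set.ncard_coe_finset _)).trans
    card_image_le

end

variable [Fact p.Prime]

theorem expectOn_posSet_cons_one_sub {m : ℕ} (hm : m ≠ 0) (g : (Fin (m + 1) → ZMod p) → ℝ)
    (b : Fin m → ZMod p) :
    expectOn (posSet (m + 1) p (Fin.cons 1 b)) g - expectOn (Xhat (m + 1) p) g
      = (∑ x ∈ xhatFinset p m with Fin.cons 1 b ⬝ᵥ x = 1, (g x - expectOn ↑(xhatFinset p m) g))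
        / (p ^ m - 1) := by
  have hcard := card_filter_cons_one_dotProduct_eq_one (p := p) b
  have hne : ({x ∈ xhatFinset p m | Fin.cons 1 b ⬝ᵥ x = 1} : Finset _).Nonempty := by
    rw [← card_pos, hcard]
    exact Nat.sub_pos_of_lt (Nat.one_lt_pow hm (Fact.out : p.Prime).one_lt)
  rw [posSet_cons_one, ← coe_xhatFinset, expectOn_coe_sub hne, hcard,
    Nat.cast_sub (Nat.one_le_pow _ _ (Fact.out : p.Prime).pos), Nat.cast_pow, Nat.cast_one]

variable {k : ℕ} {x y : Fin (k + 3) → ZMod p}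

theorem pairCount_le (hx : x ∈ xhatFinset p (k + 2)) : pairCount x y ≤ p ^ (k + 1) := by
  have hindep : LinearIndependent (ZMod p) ![Fin.tail x] := by
    rw [linearIndependent_unique_iff]
    simpa [xhatFinset] using hx
  have hcount := card_filter_forall_dotProduct_eq_mul hindep ![1 - x 0]
  simp only [Fin.forall_fin_one, Matrix.cons_val_zero, ZMod.card, Fintype.card_fin, pow_one,
    ← cons_one_dotProduct_eq_one_iff] at hcount
  calc pairCount x y ≤ #{b : Fin (k + 2) → ZMod p | Fin.cons 1 b ⬝ᵥ x = 1} :=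
        card_le_card fun b hb => mem_filter.2 ⟨mem_univ b, (mem_filter.1 hb).2.1⟩
    _ = p ^ (k + 1) :=
        Nat.eq_of_mul_eq_mul_right (Fact.out : p.Prime).pos (by rw [hcount, pow_succ])

theorem pairCount_eq_of_ne_smul (hx : x ∈ xhatFinset p (k + 2))
    (hxy : ∀ a : ZMod p, a • Fin.tail x ≠ Fin.tail y) : pairCount x y = p ^ k := by
  have hindep : LinearIndependent (ZMod p) ![Fin.tail y, Fin.tail x] := by
    rw [linearIndependent_fin2]
    exact ⟨by simpa [xhatFinset] using hx, hxy⟩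
  have hcount := card_filter_forall_dotProduct_eq_mul hindep ![1 - y 0, 1 - x 0]
  simp only [Fin.forall_fin_two, Matrix.cons_val_zero, Matrix.cons_val_one, ZMod.card,
    Fintype.card_fin, ← cons_one_dotProduct_eq_one_iff, and_comm] at hcount
  exact Nat.eq_of_mul_eq_mul_right (pow_pos (Fact.out : p.Prime).pos 2)
    (by rw [pairCount, hcount, ← pow_add])

theorem card_filter_exists_smul_le (x : Fin (k + 3) → ZMod p) :
    #{y ∈ xhatFinset p (k + 2) | ∃ a : ZMod p, a • Fin.tail x = Fin.tail y} ≤ p * (p - 1) := by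
  calc _ ≤ #((univ ×ˢ univ.erase 0).image fun sa : ZMod p × ZMod p =>
        (Fin.cons sa.1 (sa.2 • Fin.tail x) : Fin (k + 3) → ZMod p)) := by
        refine card_le_card fun y hy => ?_
        obtain ⟨hy, a, ha⟩ := mem_filter.1 hy
        have ha0 : a ≠ 0 := by
          rintro rfl
          simp [xhatFinset, ← ha] at hy
        exact mem_image.2 ⟨(y 0, a), by simp [ha0], by simp only [ha, Fin.cons_self_tail]⟩
    _ ≤ p * (p - 1) := by
        refine card_image_le.trans (le_of_eq ?_)
        rw [card_product, card_erase_of_mem (mem_univ _), card_univ, ZMod.card]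

theorem sum_abs_pairCount_sub_le (hx : x ∈ xhatFinset p (k + 2)) :
    ∑ y ∈ xhatFinset p (k + 2), |(pairCount x y : ℝ) - p ^ k| ≤ p ^ (k + 1) * (p - 1) ^ 2 := by
  have hp : (2 : ℝ) ≤ p := by exact_mod_cast (Fact.out : p.Prime).two_le
  have hpk : (0 : ℝ) < p ^ k := by positivity
  set L := {y ∈ xhatFinset p (k + 2) | ∃ a : ZMod p, a • Fin.tail x = Fin.tail y}
  calc _ = ∑ y ∈ L, |(pairCount x y : ℝ) - p ^ k| := by
        refine (sum_subset (filter_subset _ _) fun y hy hyL => ?_).symm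
        have hxy : ∀ a : ZMod p, a • Fin.tail x ≠ Fin.tail y := fun a ha =>
          hyL (mem_filter.2 ⟨hy, a, ha⟩)
        simp [pairCount_eq_of_ne_smul hx hxy]
    _ ≤ ∑ y ∈ L, (p : ℝ) ^ k * (p - 1) := by
        refine sum_le_sum fun y _ => abs_le.2 ⟨?_, ?_⟩
        · nlinarith [(pairCount x y).cast_nonneg (α := ℝ)]
        · have : (pairCount x y : ℝ) ≤ p ^ (k + 1) := by exact_mod_cast pairCount_le hx
          linarith [pow_succ (p : ℝ) k]
    _ ≤ (p * (p - 1) : ℕ) * ((p : ℝ) ^ k * (p - 1)) := by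
        rw [sum_const, nsmul_eq_mul]
        gcongr
        · nlinarith
        · exact card_filter_exists_smul_le x
    _ = p ^ (k + 1) * (p - 1) ^ 2 := by
        rw [Nat.cast_mul, Nat.cast_pred (Fact.out : p.Prime).pos]
        ring

theorem sum_sq_sum_filter_cons_dotProduct_le (h : (Fin (k + 3) → ZMod p) → ℝ)
    (hh : ∑ x ∈ xhatFinset p (k + 2), h x = 0) :
    ∑ b : Fin (k + 2) → ZMod p, (∑ x ∈ xhatFinset p (k + 2) with Fin.cons 1 b ⬝ᵥ x = 1, h x) ^ 2
      ≤ p ^ (k + 1) * (p - 1) ^ 2 * ∑ x ∈ xhatFinset p (k + 2), h x ^ 2 := by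
  set X := xhatFinset p (k + 2)
  have hconst : ∑ x ∈ X, ∑ y ∈ X, h x * h y * (p : ℝ) ^ k = 0 := by
    simp_rw [mul_assoc, ← mul_sum, ← sum_mul, hh, zero_mul]
  calc _ = ∑ x ∈ X, ∑ y ∈ X, h x * h y * pairCount x y := sum_sq_sum_filter_eq _ _ h
    _ = ∑ x ∈ X, ∑ y ∈ X, h x * h y * ((pairCount x y : ℝ) - p ^ k) := by
        simp_rw [mul_sub, sum_sub_distrib, hconst, sub_zero]
    _ ≤ _ := sum_sum_mul_mul_le_of_sum_abs_le _ h (fun x y => by rw [pairCount_comm])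
        fun x hx => sum_abs_pairCount_sub_le hx

theorem card_filter_lt_abs_expectOn_sub_mul_sq_le (g : (Fin (k + 3) → ZMod p) → ℝ)
    (hg : ∀ x ∈ Xhat (k + 3) p, g x ^ 2 ≤ 1) {ε : ℝ} (hε : 0 ≤ ε) :
    #{b : Fin (k + 2) → ZMod p |
        ε < |expectOn (posSet (k + 3) p (Fin.cons 1 b)) g - expectOn (Xhat (k + 3) p) g|} * ε ^ 2
      ≤ p ^ 2 := by
  set X := xhatFinset p (k + 2)
  set Q : ℝ := p ^ (k + 2) - 1
  set T : (Fin (k + 2) → ZMod p) → ℝ :=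
    fun b => ∑ x ∈ X with Fin.cons 1 b ⬝ᵥ x = 1, (g x - expectOn ↑X g)
  have hp : (2 : ℝ) ≤ p := by exact_mod_cast (Fact.out : p.Prime).two_le
  have hQ : (p : ℝ) ^ (k + 1) * (p - 1) ≤ Q := by
    nlinarith [one_le_pow₀ (by linarith : (1 : ℝ) ≤ p) (n := k + 1), pow_succ (p : ℝ) (k + 1)]
  have hW : 0 < (p : ℝ) ^ (k + 1) * (p - 1) := mul_pos (by positivity) (by linarith)
  have hQpos : 0 < Q := hW.trans_le hQ
  have hbad : #{b : Fin (k + 2) → ZMod p |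
        ε < |expectOn (posSet (k + 3) p (Fin.cons 1 b)) g - expectOn (Xhat (k + 3) p) g|}
      = #{b | ε * Q < |T b|} := by
    refine congrArg card (filter_congr fun b _ => ?_)
    rw [expectOn_posSet_cons_one_sub (by omega) g b, abs_div, abs_of_pos hQpos, lt_div_iff₀ hQpos]
  have hvar : ∑ x ∈ X, (g x - expectOn ↑X g) ^ 2 ≤ p ^ (k + 3) := calc
    _ ≤ ∑ x ∈ X, g x ^ 2 := sum_sub_expectOn_sq_le X g
    _ ≤ ∑ x ∈ X, 1 := sum_le_sum fun x hx => hg x (coe_xhatFinset (p := p) ▸ mem_coe.2 hx)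
    _ ≤ p ^ (k + 3) := by
        rw [sum_const, nsmul_one]
        exact_mod_cast (card_le_univ X).trans_eq (by simp)
  have hmoment : #{b | ε * Q < |T b|} * (ε * Q) ^ 2 ≤ (p : ℝ) ^ 2 * Q ^ 2 := calc
    _ ≤ ∑ b, T b ^ 2 := card_filter_lt_abs_mul_sq_le T (by positivity)
    _ ≤ p ^ (k + 1) * (p - 1) ^ 2 * ∑ x ∈ X, (g x - expectOn ↑X g) ^ 2 :=
        sum_sq_sum_filter_cons_dotProduct_le _ (sum_sub_expectOn_eq_zero X g)
    _ ≤ p ^ (k + 1) * (p - 1) ^ 2 * p ^ (k + 3) := by gcongr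
    _ = p ^ 2 * (p ^ (k + 1) * (p - 1)) ^ 2 := by ring
    _ ≤ p ^ 2 * Q ^ 2 := by gcongr
  rw [hbad]
  nlinarith [sq_pos_of_pos hQpos]

end Xhat

/-- for any query function `g : X̂_{n,p} → {-1,+1}`, at most
`p^(2n/3+2)` normalized booleanized linear functions are not
`p^(-n/3)`-independent from `g`. -/
theorem stmt1 : ∃ N : ℕ, ∀ n : ℕ, N ≤ n → ∀ p : ℕ, p.Prime →
    ∀ g : (Fin n → ZMod p) → ℝ, (∀ x ∈ Xhat n p, g x = 1 ∨ g x = -1) →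
    (({a : Fin n → ZMod p | Normalized n p a ∧
        ¬ XiIndep n p a g ((p : ℝ) ^ (-(n : ℝ) / 3))}).ncard : ℝ)
      ≤ (p : ℝ) ^ (2 * (n : ℝ) / 3 + 2) := by
  refine ⟨3, fun n hn p hp g hg => ?_⟩
  obtain ⟨k, rfl⟩ : ∃ k, n = k + 3 := ⟨n - 3, by omega⟩
  have := Fact.mk hp
  set ξ := (p : ℝ) ^ (-((k + 3 : ℕ) : ℝ) / 3)
  have hp0 : (0 : ℝ) < p := by exact_mod_cast hp.pos
  have hξ : 0 < ξ := Real.rpow_pos_of_pos hp0 _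
  calc _ ≤ (#{b : Fin (k + 2) → ZMod p |
        ξ < |expectOn (posSet (k + 3) p (Fin.cons 1 b)) g - expectOn (Xhat (k + 3) p) g|} : ℝ) := by
        exact_mod_cast ncard_normalized_not_xiIndep_le g ξ
    _ ≤ p ^ 2 / ξ ^ 2 := by
        rw [le_div_iff₀ (by positivity)]
        exact card_filter_lt_abs_expectOn_sub_mul_sq_le g
          (fun x hx => by rcases hg x hx with h | h <;> simp [h]) hξ.le
    _ = p ^ (2 * ((k + 3 : ℕ) : ℝ) / 3 + 2) := by
        rw [← Real.rpow_natCast, ← Real.rpow_natCast, ← Real.rpow_mul hp0.le, ← Real.rpow_sub hp0]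
        congr 1
        push_cast
        ring
end

section
/- There exists N such that for all n ≥ N the following holds. For every query function g : {0,1}^n → {−1,+1}, the number of s ∈ {0,1}^n \ {0^n} such that the negative parity predicate ¬⊕_s is not 2^{−n/4}-independent from g is at most 2^{n/2+2}. -/
/-- The positive set `S_s = {x ∈ {0,1}^n \ {0^n} : s·x ≡ 0 (mod 2)}` of the
negative parity predicate `¬⊕_s`. -/
def Spos (n : ℕ) (s : Fin n → ZMod 2) : Set (Fin n → ZMod 2) :=
  {x | x ≠ 0 ∧ ∑ i, s i * x i = 0}

/-- `¬⊕_s` is `ξ`-independent from the query function `g`. -/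
def XiIndep2 (n : ℕ) (s : Fin n → ZMod 2) (g : (Fin n → ZMod 2) → ℝ) (ξ : ℝ) : Prop :=
  |expectOn (Spos n s) g - expectOn Set.univ g| ≤ ξ

/-!
Write `ĝ(s) = ∑ₓ g(x) (-1)^{s·x}`. Since `1_{s·x = 0} = (1 + (-1)^{s·x}) / 2`, the sum of `g` over
the kernel of `x ↦ s·x` is `(∑ g + ĝ(s)) / 2`, and for `s ≠ 0` that kernel has `2^{n-1}` elements.
Hence the deviation `D` of the mean of `g` on `S_s` from its global mean satisfies
`ĝ(s) = (2ⁿ - 2) D + O(1)`, so `|D| > 2^{-n/4}` forces `|ĝ(s)| ≥ 2^{3n/4} / 2`. By Parseval,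
`∑ₛ ĝ(s)² = 4ⁿ`, so there are at most `4 · 2^{n/2}` such `s`.
-/

open Finset Matrix

noncomputable def signChar : AddChar (ZMod 2) ℝ :=
  AddChar.zmodChar 2 (by norm_num : (-1 : ℝ) ^ 2 = 1)

@[simp] lemma signChar_zero : signChar 0 = 1 := AddChar.map_zero_eq_one _

@[simp] lemma signChar_one : signChar 1 = -1 := by
  rw [signChar, AddChar.zmodChar_apply, ZMod.val_one, pow_one]

lemma ZMod.eq_one_of_ne_zero_two : ∀ {a : ZMod 2}, a ≠ 0 → a = 1 := by decide

lemma ite_eq_zero_eq_one_add_signChar (a : ZMod 2) :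
    (if a = 0 then 1 else 0 : ℝ) = (1 + signChar a) / 2 := by
  by_cases ha : a = 0
  · simp [ha]
  · simp [ZMod.eq_one_of_ne_zero_two ha]

section Walsh

variable {ι : Type*} [Fintype ι] [DecidableEq ι]

lemma sum_signChar_dotProduct (x : ι → ZMod 2) :
    ∑ s : ι → ZMod 2, signChar (s ⬝ᵥ x) =
      if x = 0 then (Fintype.card (ι → ZMod 2) : ℝ) else 0 := by
  split_ifs with hx
  · simp [hx]
  obtain ⟨i, hi⟩ := Function.ne_iff.mp hx
  let ψ := signChar.compAddMonoidHom (AddMonoidHom.mk' (· ⬝ᵥ x) fun a b => add_dotProduct a b x)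
  refine AddChar.sum_eq_zero_of_ne_one (ψ := ψ) (AddChar.ne_one_iff.mpr ⟨Pi.single i 1, ?_⟩)
  norm_num [ψ, single_dotProduct, ZMod.eq_one_of_ne_zero_two hi]

lemma card_fun_zmod_two : Fintype.card (ι → ZMod 2) = 2 ^ Fintype.card ι := by
  simp

noncomputable def walsh (g : (ι → ZMod 2) → ℝ) (s : ι → ZMod 2) : ℝ :=
  ∑ x, g x * signChar (s ⬝ᵥ x)

lemma sum_walsh_sq (g : (ι → ZMod 2) → ℝ) :
    ∑ s, walsh g s ^ 2 = Fintype.card (ι → ZMod 2) * ∑ x, g x ^ 2 := by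
  calc ∑ s, walsh g s ^ 2
      = ∑ x, ∑ y, g x * g y * ∑ s : ι → ZMod 2, signChar (s ⬝ᵥ (x + y)) := by
        simp_rw [walsh, sq, sum_mul_sum, mul_sum, dotProduct_add, AddChar.map_add_eq_mul]
        rw [sum_comm]
        refine sum_congr rfl fun x _ => ?_
        rw [sum_comm]
        refine sum_congr rfl fun y _ => sum_congr rfl fun s _ => by ring
    _ = ∑ x, g x * g x * Fintype.card (ι → ZMod 2) := by
        refine sum_congr rfl fun x _ => ?_
        simp_rw [sum_signChar_dotProduct, add_eq_zero_iff_eq_neg, ZModModule.neg_eq_self, mul_ite,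
          mul_zero, sum_ite_eq, if_pos (mem_univ x)]
    _ = _ := by rw [mul_sum]; exact sum_congr rfl fun x _ => by ring

lemma sum_filter_dotProduct_eq_zero (g : (ι → ZMod 2) → ℝ) (s : ι → ZMod 2) :
    ∑ x with s ⬝ᵥ x = 0, g x = (∑ x, g x + walsh g s) / 2 := by
  rw [sum_filter, walsh, ← sum_add_distrib, sum_div]
  refine sum_congr rfl fun x _ => ?_
  rw [← mul_one (g x), ← mul_ite_zero, ite_eq_zero_eq_one_add_signChar]
  ring

end Walsh

lemma expectOn_mul_ncard {α : Type*} {S : Set α} (hS : S.Finite) (g : α → ℝ) :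
    expectOn S g * S.ncard = ∑ᶠ x ∈ S, g x := by
  rcases eq_or_ne S.ncard 0 with h | h
  · simp [(Set.ncard_eq_zero hS).mp h]
  · exact div_mul_cancel₀ _ (Nat.cast_ne_zero.mpr h)

lemma expectOn_univ {α : Type*} [Fintype α] (g : α → ℝ) :
    expectOn Set.univ g = (∑ x, g x) / Fintype.card α := by
  rw [expectOn, finsum_mem_univ, finsum_eq_sum_of_fintype, Set.ncard_univ,
    Nat.card_eq_fintype_card]

section Spos

variable {n : ℕ} (s : Fin n → ZMod 2)

lemma Spos_eq_coe_erase : Spos n s = ↑((univ.filter (s ⬝ᵥ · = 0)).erase 0) := by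
  ext x
  simp only [Spos, coe_erase, coe_filter, mem_univ, true_and, Set.mem_sdiff,
    Set.mem_singleton_iff]
  exact and_comm

lemma zero_mem_filter_dotProduct_eq_zero : (0 : Fin n → ZMod 2) ∈ univ.filter (s ⬝ᵥ · = 0) :=
  mem_filter.mpr ⟨mem_univ _, dotProduct_zero s⟩

lemma finsum_Spos (g : (Fin n → ZMod 2) → ℝ) :
    ∑ᶠ x ∈ Spos n s, g x = (∑ x, g x + walsh g s) / 2 - g 0 := by
  rw [Spos_eq_coe_erase, finsum_mem_coe_finset, ← sum_filter_dotProduct_eq_zero,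
    ← sum_erase_add _ _ (zero_mem_filter_dotProduct_eq_zero s), add_sub_cancel_right]

lemma ncard_Spos (hs : s ≠ 0) : ((Spos n s).ncard : ℝ) = 2 ^ n / 2 - 1 := by
  have hker := sum_filter_dotProduct_eq_zero (fun _ => (1 : ℝ)) s
  have hwalsh : walsh (fun _ => (1 : ℝ)) s = 0 := by
    simp_rw [walsh, one_mul, dotProduct_comm s, sum_signChar_dotProduct, if_neg hs]
  rw [hwalsh, sum_const, nsmul_one] at hker
  rw [Spos_eq_coe_erase, Set.ncard_coe_finset,
    cast_card_erase_of_mem (zero_mem_filter_dotProduct_eq_zero s), hker]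
  simp

lemma walsh_eq_of_ne_zero (g : (Fin n → ZMod 2) → ℝ) (hs : s ≠ 0) :
    walsh g s = (2 ^ n - 2) * (expectOn (Spos n s) g - expectOn Set.univ g)
      + 2 * g 0 - 2 * (∑ x, g x) / 2 ^ n := by
  have h := expectOn_mul_ncard (Set.toFinite (Spos n s)) g
  rw [ncard_Spos s hs, finsum_Spos] at h
  rw [expectOn_univ, card_fun_zmod_two, Fintype.card_fin, Nat.cast_pow, Nat.cast_two]
  field_simp
  linear_combination (-2 * 2 ^ n) * h

lemma abs_walsh_ge (g : (Fin n → ZMod 2) → ℝ) (hg : ∀ x, |g x| ≤ 1) (hs : s ≠ 0) :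
    (2 ^ n - 2) * |expectOn (Spos n s) g - expectOn Set.univ g| - 4 ≤ |walsh g s| := by
  have hn : 1 ≤ n := Nat.pos_of_ne_zero (by rintro rfl; exact hs (Subsingleton.elim _ _))
  have hpow : (2 : ℝ) ≤ 2 ^ n := le_self_pow₀ one_le_two (by omega)
  have hsum : |∑ x, g x| ≤ 2 ^ n := by
    calc |∑ x, g x| ≤ ∑ x, |g x| := abs_sum_le_sum_abs _ _
      _ ≤ ∑ _x : Fin n → ZMod 2, 1 := sum_le_sum fun x _ => hg x
      _ = 2 ^ n := by simp
  have hmean : |2 * (∑ x, g x) / 2 ^ n| ≤ 2 := by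
    rw [abs_div, abs_mul, abs_two, abs_of_pos (by positivity : (0 : ℝ) < 2 ^ n),
      div_le_iff₀ (by positivity)]
    linarith
  set D := expectOn (Spos n s) g - expectOn Set.univ g
  have hdiff : |(2 ^ n - 2) * D - walsh g s| ≤ 4 := by
    rw [walsh_eq_of_ne_zero s g hs]
    have hg0 := abs_le.mp (hg 0)
    have hmean' := abs_le.mp hmean
    exact abs_le.mpr ⟨by linarith, by linarith⟩
  have hscale : (2 ^ n - 2) * |D| = |(2 ^ n - 2) * D| := by
    rw [abs_mul, abs_of_nonneg (by linarith : (0 : ℝ) ≤ 2 ^ n - 2)]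
  linarith [abs_sub_abs_le_abs_sub ((2 ^ n - 2) * D) (walsh g s)]

end Spos

lemma ncard_mul_sq_le_sum_sq {α : Type*} [Fintype α] {B : Set α} {f : α → ℝ} {c : ℝ}
    (hc : 0 ≤ c) (hB : ∀ s ∈ B, c ≤ |f s|) : B.ncard * c ^ 2 ≤ ∑ s, f s ^ 2 := by
  classical
  rw [Set.ncard_eq_toFinset_card']
  calc (#B.toFinset : ℝ) * c ^ 2 = ∑ _s ∈ B.toFinset, c ^ 2 := by rw [sum_const, nsmul_eq_mul]
    _ ≤ ∑ s ∈ B.toFinset, f s ^ 2 := sum_le_sum fun s hs => by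
        rw [← sq_abs (f s)]
        exact pow_le_pow_left₀ hc (hB s (Set.mem_toFinset.mp hs)) 2
    _ ≤ ∑ s, f s ^ 2 := sum_le_univ_sum_of_nonneg fun s => sq_nonneg _

lemma ncard_not_xiIndep2_mul_sq_le {n : ℕ} (g : (Fin n → ZMod 2) → ℝ)
    (hg : ∀ x, g x = 1 ∨ g x = -1) {ξ : ℝ} (hξ : ξ ≤ 1) (hlarge : 12 ≤ 2 ^ n * ξ) :
    ({s | s ≠ 0 ∧ ¬ XiIndep2 n s g ξ}.ncard : ℝ) * ξ ^ 2 ≤ 4 := by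
  have hg_sq : ∀ x, g x ^ 2 = 1 := fun x => by rcases hg x with h | h <;> simp [h]
  have hbad : ∀ s ∈ {s | s ≠ 0 ∧ ¬ XiIndep2 n s g ξ}, 2 ^ n * ξ / 2 ≤ |walsh g s| := by
    rintro s ⟨hs, hdev⟩
    rw [XiIndep2, not_le] at hdev
    have hpow : 12 ≤ (2 : ℝ) ^ n := hlarge.trans (mul_le_of_le_one_right (by positivity) hξ)
    have hwalsh := abs_walsh_ge s g (fun x => by rw [← sq_le_one_iff_abs_le_one, hg_sq]) hs
    linarith [mul_le_mul_of_nonneg_left hdev.le (by linarith : (0 : ℝ) ≤ 2 ^ n - 2)]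
  have hcount := ncard_mul_sq_le_sum_sq (by linarith) hbad
  simp only [sum_walsh_sq, hg_sq, sum_const, card_univ, card_fun_zmod_two, Fintype.card_fin,
    nsmul_one, Nat.cast_pow, Nat.cast_two] at hcount
  refine le_of_mul_le_mul_left (a := (2 ^ n) ^ 2 / 4) ?_ (by positivity)
  linear_combination hcount

/-- for any query function `g : {0,1}^n → {-1,+1}`, at most
`2^(n/2+2)` negative parity predicates `¬⊕_s` (with `s ≠ 0^n`) are not
`2^(-n/4)`-independent from `g`. -/
theorem stmt2 : ∃ N : ℕ, ∀ n : ℕ, N ≤ n →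
    ∀ g : (Fin n → ZMod 2) → ℝ, (∀ x, g x = 1 ∨ g x = -1) →
    (({s : Fin n → ZMod 2 | s ≠ 0 ∧
        ¬ XiIndep2 n s g ((2 : ℝ) ^ (-(n : ℝ) / 4))}).ncard : ℝ)
      ≤ (2 : ℝ) ^ ((n : ℝ) / 2 + 2) := by
  refine ⟨8, fun n hn g hg => ?_⟩
  set ξ : ℝ := 2 ^ (-(n : ℝ) / 4)
  have hn' : (8 : ℝ) ≤ n := by exact_mod_cast hn
  have hξ_le : ξ ≤ 1 := Real.rpow_le_one_of_one_le_of_nonpos one_le_two (by linarith)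
  have hlarge : 12 ≤ 2 ^ n * ξ := by
    rw [← Real.rpow_natCast, ← Real.rpow_add two_pos]
    calc (12 : ℝ) ≤ 2 ^ (4 : ℝ) := by norm_num
      _ ≤ _ := Real.rpow_le_rpow_of_exponent_le one_le_two (by linarith)
  have hξ_sq : 2 ^ ((n : ℝ) / 2 + 2) * ξ ^ 2 = 4 := by
    rw [← Real.rpow_natCast, ← Real.rpow_mul zero_le_two, ← Real.rpow_add two_pos]
    ring_nf
    norm_num
  refine le_of_mul_le_mul_right ?_ (by positivity : 0 < ξ ^ 2)
  rw [hξ_sq]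
  exact ncard_not_xiIndep2_mul_sq_le g hg hξ_le hlarge
end

section
/- Let p be a prime and n ≥ 2. Let a, b ∈ (ℤ_p)^n be distinct vectors with a[0] = b[0] = 1. Then the number of x ∈ X̂_{n,p} at which the normalized booleanized linear functions L_a and L_b agree, i.e. |{x ∈ X̂_{n,p} : L_a(x) = L_b(x)}|, is exactly (p² − 2p + 2)·p^{n−2} − p. -/
open Finset Function Matrix

theorem AddMonoidHom.card_filter_mem_mul_card_of_surjective {G H : Type*} [AddGroup G]
    [Fintype G] [AddGroup H] [Fintype H] [DecidableEq H] (f : G →+ H) (hf : Surjective f)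
    (s : Finset H) :
    #{g | f g ∈ s} * Fintype.card H = #s * Fintype.card G := by
  have hcount (t : Finset H) : #{g | f g ∈ t} = #t * #{g | f g = 0} := by
    rw [card_eq_sum_card_fiberwise (s := {g | f g ∈ t}) (t := t)
      fun g hg => (mem_filter.mp hg).2, ← smul_eq_mul, ← sum_const]
    refine sum_congr rfl fun y hy => ?_
    rw [filter_filter, ← card_fiber_eq_of_mem_range f (hf y) (hf 0)]
    congr 1
    exact filter_congr fun g _ => ⟨And.right, fun h => ⟨h ▸ hy, h⟩⟩
  have huniv := hcount univ
  rw [filter_true_of_mem fun g _ => mem_univ _, card_univ, card_univ] at huniv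
  rw [hcount, huniv]
  ring

theorem Matrix.mulVec_surjective_of_linearIndependent_row {K m n : Type*} [Field K] [Fintype m]
    [Fintype n] {A : Matrix m n K} (hA : LinearIndependent K A.row) : Surjective A.mulVec := by
  have hrange : LinearMap.range A.mulVecLin = ⊤ := by
    apply Submodule.eq_top_of_finrank_eq
    rw [← Matrix.rank, hA.rank_matrix, Module.finrank_fintype_fun_eq_card]
  exact LinearMap.range_eq_top.mp hrange

theorem linearIndependent_pair_of_ne_of_apply_eq {K ι : Type*} [Field K] {a b : ι → K}
    (hab : a ≠ b) {i : ι} (hi : a i = b i) (ha : a i ≠ 0) : LinearIndependent K ![a, b] := by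
  refine LinearIndependent.pair_iff.mpr fun s t hst => ?_
  have hsum : s + t = 0 := by
    have hst_i : s * a i + t * b i = 0 := by simpa using congrFun hst i
    rw [← hi] at hst_i
    exact (mul_eq_zero.mp (by linear_combination hst_i)).resolve_right ha
  obtain rfl : t = -s := eq_neg_of_add_eq_zero_right hsum
  have hs : s • (a - b) = 0 := by rw [smul_sub, ← hst, neg_smul, sub_eq_add_neg]
  obtain rfl := (smul_eq_zero.mp hs).resolve_right (sub_ne_zero.mpr hab)
  simp

theorem dotProduct_pair_surjective {K ι : Type*} [Field K] [Fintype ι] {a b : ι → K}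
    (h : LinearIndependent K ![a, b]) : Surjective fun x => (a ⬝ᵥ x, b ⬝ᵥ x) := by
  intro y
  obtain ⟨x, hx⟩ :=
    mulVec_surjective_of_linearIndependent_row (A := Matrix.of ![a, b]) h ![y.1, y.2]
  refine ⟨x, Prod.ext ?_ ?_⟩
  · simpa using congrFun hx 0
  · simpa using congrFun hx 1

theorem card_filter_fst_eq_iff_snd_eq {α : Type*} [Fintype α] [DecidableEq α] (c : α) :
    #{y : α × α | y.1 = c ↔ y.2 = c} = (Fintype.card α - 1) ^ 2 + 1 := by
  have hsplit : ({y : α × α | y.1 = c ↔ y.2 = c} : Finset _) =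
      ({c}ᶜ ×ˢ {c}ᶜ ∪ {(c, c)} : Finset _) := by
    ext ⟨u, v⟩
    simp only [mem_filter, mem_univ, true_and, mem_union, mem_product, mem_compl, mem_singleton,
      Prod.mk.injEq]
    tauto
  rw [hsplit, card_union_of_disjoint (by simp), card_product, card_compl, card_singleton,
    card_singleton, sq]

theorem compl_Xhat (m p : ℕ) : (Xhat (m + 1) p)ᶜ = Set.range (Pi.single 0) := by
  ext x
  simp only [Xhat, Set.mem_compl_iff, Set.mem_ofPred_eq, not_exists, not_and, not_not,
    Set.mem_range]
  constructor
  · intro h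
    refine ⟨x 0, funext fun i => ?_⟩
    rcases eq_or_ne i 0 with rfl | hi
    · simp
    · rw [Pi.single_eq_of_ne hi, h i (Fin.val_ne_zero_iff.mpr hi)]
  · rintro ⟨c, rfl⟩ i hi
    exact Pi.single_eq_of_ne (Fin.val_ne_zero_iff.mp hi) _

theorem card_filter_dotProduct_eq_one_iff_mul {K ι : Type*} [Field K] [Fintype K] [DecidableEq K]
    [Fintype ι] [DecidableEq ι] {a b : ι → K} (h : LinearIndependent K ![a, b]) :
    #{x | a ⬝ᵥ x = 1 ↔ b ⬝ᵥ x = 1} * Fintype.card K ^ 2 =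
      ((Fintype.card K - 1) ^ 2 + 1) * Fintype.card K ^ Fintype.card ι := by
  let f : (ι → K) →+ K × K :=
    AddMonoidHom.mk' (fun x => (a ⬝ᵥ x, b ⬝ᵥ x)) fun x y => by simp [dotProduct_add]
  simpa [f, card_filter_fst_eq_iff_snd_eq, sq] using
    f.card_filter_mem_mul_card_of_surjective (dotProduct_pair_surjective h)
      {y | y.1 = 1 ↔ y.2 = 1}

/-- two distinct normalized booleanized linear functions `L_a` and
`L_b` agree at exactly `(p² - 2p + 2)·p^(n-2) - p` points of `X̂_{n,p}`. -/
theorem stmt7 (n p : ℕ) (hp : p.Prime) (hn : 2 ≤ n)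
    (a b : Fin n → ZMod p) (hab : a ≠ b)
    (ha : ∀ i : Fin n, (i : ℕ) = 0 → a i = 1)
    (hb : ∀ i : Fin n, (i : ℕ) = 0 → b i = 1) :
    ({x ∈ Xhat n p | ((∑ i, a i * x i = 1) ↔ (∑ i, b i * x i = 1))}).ncard
      = (p ^ 2 - 2 * p + 2) * p ^ (n - 2) - p := by
  have : Fact p.Prime := ⟨hp⟩
  obtain ⟨m, rfl⟩ : ∃ m, n = m + 1 := ⟨n - 1, by omega⟩
  have ha0 : a 0 = 1 := ha 0 rfl
  have hb0 : b 0 = 1 := hb 0 rfl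
  have hagree : ({x | a ⬝ᵥ x = 1 ↔ b ⬝ᵥ x = 1} : Set (Fin (m + 1) → ZMod p)).ncard =
      (p ^ 2 - 2 * p + 2) * p ^ (m + 1 - 2) := by
    have hcard := card_filter_dotProduct_eq_one_iff_mul <|
      linearIndependent_pair_of_ne_of_apply_eq hab (ha0.trans hb0.symm) (by simp [ha0])
    have hpoly : (p - 1) ^ 2 + 1 = p ^ 2 - 2 * p + 2 := by
      have h : 2 * p ≤ p ^ 2 := by nlinarith [hp.two_le]
      zify [h, hp.one_le]
      ring
    have hpow : p ^ (m + 1) = p ^ (m + 1 - 2) * p ^ 2 := by rw [← pow_add]; congr 1; omega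
    rw [ZMod.card, Fintype.card_fin, hpoly, hpow, ← mul_assoc] at hcard
    rw [Set.ncard_eq_toFinset_card', Set.toFinset_ofPred]
    exact Nat.eq_of_mul_eq_mul_right (pow_pos hp.pos 2) hcard
  have hsub : (Xhat (m + 1) p)ᶜ ⊆ {x | a ⬝ᵥ x = 1 ↔ b ⬝ᵥ x = 1} := by
    rw [compl_Xhat]
    rintro _ ⟨c, rfl⟩
    simp [dotProduct_single, ha0, hb0]
  have hdiff : {x ∈ Xhat (m + 1) p | ((∑ i, a i * x i = 1) ↔ (∑ i, b i * x i = 1))} =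
      {x | a ⬝ᵥ x = 1 ↔ b ⬝ᵥ x = 1} \ (Xhat (m + 1) p)ᶜ := by
    ext x
    simp [dotProduct, and_comm]
  rw [hdiff, Set.ncard_sdiff hsub, hagree, compl_Xhat,
    Set.ncard_range_of_injective (Pi.single_injective 0), Nat.card_zmod]
end
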